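/- Let P and Q be unstable H*V-A-modules that are free as H*V-modules, and let f: P → Q be an injective H*V-linear and A-linear map. If P̄ is a reduced unstable A-module, then the induced map f̄: P̄ → Q̄ is injective. -/

import Mathlib

/-!
Common preamble: the mod 2 Steenrod algebra `SteenrodAlgebra` (defined by generators
`Sq i` and the Adem relations), the category `U` of unstable modules over it
(`UnstableModule`, `UnstableHom`), the polynomial algebra `H^*V` for `V` an elementary
abelian 2-group of rank `d` (`HVSetup`), the category `H^*V-U` of unstable
`H^*V`-`A`-modules (`HVModule`, `HVHom`), and the various notions used in the paper
(nilpotent, reduced, nil-closed, injectives, injective hulls, Brown-Gitler modules,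
tensor products, direct sums, the functor `Fix`, bar quotients `Ē = F_2 ⊗_{H^*V} E`, …).
-/

noncomputable section

/-- The Adem relations (together with `Sq⁰ = 1`) on the free `ZMod 2`-algebra
generated by symbols `Sq i`, `i : ℕ`. -/
inductive AdemRel : FreeAlgebra (ZMod 2) ℕ → FreeAlgebra (ZMod 2) ℕ → Prop
  | adem (a b : ℕ) (ha : 0 < a) (hab : a < 2 * b) :
      AdemRel (FreeAlgebra.ι (ZMod 2) a * FreeAlgebra.ι (ZMod 2) b)
        (∑ c ∈ Finset.range (a / 2 + 1),
          ((Nat.choose (b - c - 1) (a - 2 * c) : ZMod 2)) •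
            (FreeAlgebra.ι (ZMod 2) (a + b - c) * FreeAlgebra.ι (ZMod 2) c))
  | unit : AdemRel (FreeAlgebra.ι (ZMod 2) 0) 1

/-- The mod 2 Steenrod algebra `A`. -/
abbrev SteenrodAlgebra : Type := RingQuot AdemRel

/-- The Steenrod squares `Sq i ∈ A`. -/
def Sq (i : ℕ) : SteenrodAlgebra :=
  RingQuot.mkAlgHom (ZMod 2) AdemRel (FreeAlgebra.ι (ZMod 2) i)

/-- An unstable module over the mod 2 Steenrod algebra: a graded `ZMod 2`-vector space
with a compatible `A`-action such that `Sq i` raises degrees by `i` and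
`Sq i x = 0` whenever `i > |x|` (the instability condition).  Objects of `U`. -/
structure UnstableModule : Type 1 where
  carrier : Type
  [acg : AddCommGroup carrier]
  [modA : Module SteenrodAlgebra carrier]
  [modF : Module (ZMod 2) carrier]
  [tower : IsScalarTower (ZMod 2) SteenrodAlgebra carrier]
  grading : ℕ → Submodule (ZMod 2) carrier
  isInternal : DirectSum.IsInternal grading
  sq_mem : ∀ (i n : ℕ) (x : carrier), x ∈ grading n → Sq i • x ∈ grading (n + i)
  instability : ∀ (i n : ℕ) (x : carrier), x ∈ grading n → n < i → Sq i • x = 0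

attribute [instance] UnstableModule.acg UnstableModule.modA UnstableModule.modF
  UnstableModule.tower

/-- Morphisms of `U`: `A`-linear maps of degree zero. -/
structure UnstableHom (M N : UnstableModule) where
  toFun : M.carrier →ₗ[SteenrodAlgebra] N.carrier
  map_grading : ∀ (n : ℕ) (x : M.carrier), x ∈ M.grading n → toFun x ∈ N.grading n

/-- Composition of morphisms of `U`. -/
def UnstableHom.comp {M N P : UnstableModule} (g : UnstableHom N P) (f : UnstableHom M N) :
    UnstableHom M P :=
  ⟨g.toFun.comp f.toFun, fun n x hx => g.map_grading n _ (f.map_grading n x hx)⟩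

/-- The identity morphism of `U`. -/
def UnstableHom.id (M : UnstableModule) : UnstableHom M M :=
  ⟨LinearMap.id, fun _ _ h => h⟩

/-- `M ≅ N` in the category `U`. -/
def UIso (M N : UnstableModule) : Prop :=
  ∃ (f : UnstableHom M N) (g : UnstableHom N M),
    (∀ x, g.toFun (f.toFun x) = x) ∧ ∀ y, f.toFun (g.toFun y) = y

/-- `sq0Iter M k n x` is the `k`-fold iterate of `Sq₀ : x ↦ Sq^{|x|} x` on an element
`x` of degree `n` (whose `j`-th iterate has degree `2^j * n`). -/
def sq0Iter (M : UnstableModule) : ℕ → ℕ → M.carrier → M.carrier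
  | 0, _, x => x
  | k + 1, n, x => Sq (2 ^ k * n) • sq0Iter M k n x

/-- An unstable module is nilpotent if every (homogeneous) element is killed by some
iterate of `Sq₀`. -/
def IsNilpotentU (M : UnstableModule) : Prop :=
  ∀ (n : ℕ) (x : M.carrier), x ∈ M.grading n → ∃ k, sq0Iter M k n x = 0

/-- An unstable module is reduced if `Sq₀ : x ↦ Sq^{|x|} x` is injective. -/
def IsReducedU (M : UnstableModule) : Prop :=
  ∀ (n : ℕ) (x : M.carrier), x ∈ M.grading n → Sq n • x = 0 → x = 0

/-- An unstable module is nil-closed if it is reduced and `Ker Sq₁ = Im Sq₀`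
(on homogeneous elements, `Sq₁ x = Sq^{|x|-1} x` and `Sq₀ y = Sq^{|y|} y`). -/
def IsNilClosedU (M : UnstableModule) : Prop :=
  IsReducedU M ∧
  ∀ (n : ℕ) (x : M.carrier), x ∈ M.grading n →
    (Sq (n - 1) • x = 0 ↔ ∃ (m : ℕ) (y : M.carrier), y ∈ M.grading m ∧ Sq m • y = x)

/-- A graded submodule: an `A`-submodule spanned by its homogeneous elements. -/
def IsGradedSub (M : UnstableModule) (p : Submodule SteenrodAlgebra M.carrier) : Prop :=
  ∀ x ∈ p, x ∈ Submodule.span (ZMod 2)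
    ((p : Set M.carrier) ∩ ⋃ n, ((M.grading n : Submodule (ZMod 2) M.carrier) : Set M.carrier))

/-- Injective objects of the category `U` (lifting property against monomorphisms). -/
def IsInjectiveU (I : UnstableModule) : Prop :=
  ∀ (M N : UnstableModule) (f : UnstableHom M N), Function.Injective f.toFun →
    ∀ g : UnstableHom M I, ∃ h : UnstableHom N I, ∀ x, h.toFun (f.toFun x) = g.toFun x

/-- `i : M ↪ E` exhibits `E` as the injective hull of `M` in `U`: `E` is injective,
`i` is injective, and the extension is essential (every non-trivial graded
`A`-submodule of `E` meets the image of `M` non-trivially). -/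
def IsInjectiveHullU (M E : UnstableModule) (i : UnstableHom M E) : Prop :=
  IsInjectiveU E ∧ Function.Injective i.toFun ∧
  ∀ p : Submodule SteenrodAlgebra E.carrier, IsGradedSub E p → p ≠ ⊥ →
    ∃ x, x ≠ 0 ∧ x ∈ p ∧ x ∈ Set.range i.toFun

/-- The Brown-Gitler module `J(n)`: it represents the functor `M ↦ (Mⁿ)^∨`, i.e.
there is a bijection `Hom_U(M, J(n)) ≅ Hom_{F_2}(Mⁿ, F_2)`, natural in `M`. -/
def IsBrownGitler (J : UnstableModule) (n : ℕ) : Prop :=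
  ∃ Φ : ∀ M : UnstableModule, UnstableHom M J → (↥(M.grading n) →ₗ[ZMod 2] ZMod 2),
    (∀ M, Function.Bijective (Φ M)) ∧
    ∀ (M M' : UnstableModule) (f : UnstableHom M' M) (g : UnstableHom M J)
      (x : ↥(M'.grading n)),
      Φ M' (g.comp f) x = Φ M g ⟨f.toFun x, f.map_grading n x x.2⟩

/-- `T` realizes the tensor product `M ⊗_{F_2} N` in `U` (with the Cartan formula
giving the `A`-action and the total grading). -/
def IsTensorOf (M N T : UnstableModule) : Prop :=
  ∃ β : M.carrier →ₗ[ZMod 2] N.carrier →ₗ[ZMod 2] T.carrier,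
    (∀ (m n : ℕ) (x : M.carrier) (y : N.carrier), x ∈ M.grading m → y ∈ N.grading n →
      β x y ∈ T.grading (m + n)) ∧
    (∀ (k : ℕ) (x : M.carrier) (y : N.carrier),
      Sq k • β x y = ∑ i ∈ Finset.range (k + 1), β (Sq i • x) (Sq (k - i) • y)) ∧
    Function.Bijective (TensorProduct.lift β)

/-- `I` is the direct sum (coproduct in `U`) of the family `F`. -/
def IsDirectSumOf (I : UnstableModule) {ι : Type} (F : ι → UnstableModule) : Prop :=
  letI := Classical.decEq ι
  ∃ j : ∀ i, UnstableHom (F i) I,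
    Function.Bijective
      (DirectSum.toModule SteenrodAlgebra ι I.carrier fun i => (j i).toFun)

/-- An indecomposable (non-trivial) object of `U`: its only idempotent endomorphisms
are `0` and the identity. -/
def IndecomposableU (L : UnstableModule) : Prop :=
  (∃ x : L.carrier, x ≠ 0) ∧
  ∀ e : UnstableHom L L, (∀ x, e.toFun (e.toFun x) = e.toFun x) →
    (∀ x, e.toFun x = 0) ∨ (∀ x, e.toFun x = x)

/-- `H^*V` for `V` an elementary abelian 2-group of rank `d`: a polynomial algebra
`F_2[t_1, …, t_d]` on generators of degree 1, with its unstable `A`-algebra structure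
(`Sq¹ t = t²` and the Cartan formula).  `cV` is the top Dickson invariant
`∏_{0 ≠ u ∈ H¹V} u`. -/
structure HVSetup (d : ℕ) : Type 1 where
  H : Type
  [ring : CommRing H]
  [modA : Module SteenrodAlgebra H]
  [modF : Module (ZMod 2) H]
  [tower : IsScalarTower (ZMod 2) SteenrodAlgebra H]
  grading : ℕ → Submodule (ZMod 2) H
  isInternal : DirectSum.IsInternal grading
  sq_mem : ∀ (i n : ℕ) (x : H), x ∈ grading n → Sq i • x ∈ grading (n + i)
  instability : ∀ (i n : ℕ) (x : H), x ∈ grading n → n < i → Sq i • x = 0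
  one_mem : (1 : H) ∈ grading 0
  mul_mem : ∀ (m n : ℕ) (x y : H), x ∈ grading m → y ∈ grading n → x * y ∈ grading (m + n)
  cartanH : ∀ (k : ℕ) (x y : H),
    Sq k • (x * y) = ∑ i ∈ Finset.range (k + 1), (Sq i • x) * (Sq (k - i) • y)
  gens : Fin d → H
  gens_deg : ∀ i, gens i ∈ grading 1
  sq_one_gen : ∀ i, Sq 1 • gens i = gens i * gens i
  monomial_indep : LinearIndependent (ZMod 2) (fun e : Fin d → ℕ => ∏ i, gens i ^ e i)
  monomial_span : ⊤ ≤ Submodule.span (ZMod 2) (Set.range fun e : Fin d → ℕ => ∏ i, gens i ^ e i)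
  cV : H
  cV_spec : ∃ s : Finset H, (∀ u, u ∈ s ↔ (u ∈ grading 1 ∧ u ≠ 0)) ∧ cV = ∏ u ∈ s, u

attribute [instance] HVSetup.ring HVSetup.modA HVSetup.modF HVSetup.tower

/-- `H^*V` as an object of `U`. -/
@[reducible] def HVSetup.toUnstable {d : ℕ} (V : HVSetup d) : UnstableModule where
  carrier := V.H
  grading := V.grading
  isInternal := V.isInternal
  sq_mem := V.sq_mem
  instability := V.instability

/-- A representative of an indecomposable direct factor of some `H^*((Z/2)^m)`
(an element of the set `𝓛` of the classification theorems). -/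
def IsIndecInjFactor (L : UnstableModule) : Prop :=
  IndecomposableU L ∧
  ∃ (m : ℕ) (V : HVSetup m) (j : UnstableHom L V.toUnstable)
    (r : UnstableHom V.toUnstable L), ∀ x, r.toFun (j.toFun x) = x

/-- An unstable `H^*V`-`A`-module: an object `E` of `U` together with a compatible
`H^*V`-module structure satisfying the Cartan formula, and the data of the unstable
`A`-module `Ē = F_2 ⊗_{H^*V} E = E / (H̃^*V · E)` with the projection `barπ : E → Ē`. -/
structure HVModule {d : ℕ} (V : HVSetup d) : Type 1 where
  E : UnstableModule
  [modH : Module V.H E.carrier]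
  smul_grading : ∀ (m n : ℕ) (h : V.H) (x : E.carrier),
    h ∈ V.grading m → x ∈ E.grading n → h • x ∈ E.grading (m + n)
  cartan : ∀ (k : ℕ) (h : V.H) (x : E.carrier),
    Sq k • (h • x) = ∑ i ∈ Finset.range (k + 1), (Sq i • h) • (Sq (k - i) • x)
  bar : UnstableModule
  barπ : UnstableHom E bar
  barπ_surj : Function.Surjective barπ.toFun
  barπ_ker : ∀ y : E.carrier, barπ.toFun y = 0 ↔
    y ∈ Submodule.span (ZMod 2)
      {z : E.carrier | ∃ (m : ℕ) (h : V.H) (x : E.carrier),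
        1 ≤ m ∧ h ∈ V.grading m ∧ z = h • x}

attribute [instance] HVModule.modH

/-- Morphisms of `H^*V-U`: `H^*V`-linear and `A`-linear maps of degree zero. -/
structure HVHom {d : ℕ} (V : HVSetup d) (M N : HVModule V) extends UnstableHom M.E N.E where
  map_hsmul : ∀ (h : V.H) (x : M.E.carrier), toFun (h • x) = h • toFun x

/-- `M ≅ N` in the category `H^*V-U`. -/
def HVIso {d : ℕ} {V : HVSetup d} (M N : HVModule V) : Prop :=
  ∃ (f : HVHom V M N) (g : HVHom V N M),
    (∀ x, g.toFun (f.toFun x) = x) ∧ ∀ y, f.toFun (g.toFun y) = y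

/-- `ι : P → T` realizes `T` as `H^*V ⊗ P`, via the universal property: every `A`-linear
map from `P` to an unstable `H^*V`-`A`-module extends uniquely to an `H^*V`-`A`-linear
map from `T`. -/
def IsHVTensor {d : ℕ} (V : HVSetup d) (P : UnstableModule) (T : HVModule V)
    (ι : UnstableHom P T.E) : Prop :=
  ∀ (N : HVModule V) (f : UnstableHom P N.E),
    ∃ g : HVHom V T N, (∀ x, g.toFun (ι.toFun x) = f.toFun x) ∧
      ∀ g' : HVHom V T N, (∀ x, g'.toFun (ι.toFun x) = f.toFun x) →
        ∀ y, g'.toFun y = g.toFun y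

/-- Injective objects of the category `H^*V-U`. -/
def IsInjectiveHVU {d : ℕ} {V : HVSetup d} (I : HVModule V) : Prop :=
  ∀ (M N : HVModule V) (f : HVHom V M N), Function.Injective f.toFun →
    ∀ g : HVHom V M I, ∃ h : HVHom V N I, ∀ x, h.toFun (f.toFun x) = g.toFun x

/-- `i : M ↪ E` exhibits `E` as the injective hull of `M` in `H^*V-U`. -/
def IsInjectiveHullHVU {d : ℕ} {V : HVSetup d} (M E : HVModule V) (i : HVHom V M E) : Prop :=
  IsInjectiveHVU E ∧ Function.Injective i.toFun ∧
  ∀ p : Submodule SteenrodAlgebra E.E.carrier, IsGradedSub E.E p →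
    (∀ (h : V.H) (x : E.E.carrier), x ∈ p → h • x ∈ p) → p ≠ ⊥ →
    ∃ x, x ≠ 0 ∧ x ∈ p ∧ x ∈ Set.range i.toFun

/-- `I` is the direct sum (in `H^*V-U`) of the family `F`. -/
def IsHVDirectSumOf {d : ℕ} {V : HVSetup d} (I : HVModule V) {ι : Type}
    (F : ι → HVModule V) : Prop :=
  letI := Classical.decEq ι
  ∃ j : ∀ i, HVHom V (F i) I,
    Function.Bijective
      (DirectSum.toModule SteenrodAlgebra ι I.E.carrier fun i => (j i).toFun)

/-- `T` realizes `M ⊗_{F_2} L` in `H^*V-U` (with `H^*V` acting on the first factor). -/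
def IsHVTensorWithU {d : ℕ} {V : HVSetup d} (M : HVModule V) (L : UnstableModule)
    (T : HVModule V) : Prop :=
  ∃ β : M.E.carrier →ₗ[ZMod 2] L.carrier →ₗ[ZMod 2] T.E.carrier,
    (∀ (m n : ℕ) (x : M.E.carrier) (y : L.carrier),
      x ∈ M.E.grading m → y ∈ L.grading n → β x y ∈ T.E.grading (m + n)) ∧
    (∀ (k : ℕ) (x : M.E.carrier) (y : L.carrier),
      Sq k • β x y = ∑ i ∈ Finset.range (k + 1), β (Sq i • x) (Sq (k - i) • y)) ∧
    (∀ (h : V.H) (x : M.E.carrier) (y : L.carrier), β (h • x) y = h • β x y) ∧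
    Function.Bijective (TensorProduct.lift β)

/-- A morphism of setups `H^*(V/W) → H^*V` induced by a projection `V → V/W` onto a
quotient by a subgroup `W`: an injective map of unstable `A`-algebras. -/
structure SetupMap {e d : ℕ} (U : HVSetup e) (V : HVSetup d) where
  toHom : UnstableHom U.toUnstable V.toUnstable
  map_one : toHom.toFun 1 = 1
  map_mul : ∀ x y, toHom.toFun (x * y) = toHom.toFun x * toHom.toFun y
  inj : Function.Injective toHom.toFun

/-- `ι : M → T` realizes `T` as the base change `H^*V ⊗_{H^*(V/W)} M` along
`ρ : H^*(V/W) → H^*V`, via the universal property of extension of scalars. -/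
def IsBaseChangeOf {e d : ℕ} {U : HVSetup e} {V : HVSetup d} (ρ : SetupMap U V)
    (M : HVModule U) (T : HVModule V) (ι : UnstableHom M.E T.E) : Prop :=
  (∀ (h : U.H) (x : M.E.carrier), ι.toFun (h • x) = ρ.toHom.toFun h • ι.toFun x) ∧
  ∀ (N : HVModule V) (f : UnstableHom M.E N.E),
    (∀ (h : U.H) (x : M.E.carrier), f.toFun (h • x) = ρ.toHom.toFun h • f.toFun x) →
    ∃ g : HVHom V T N, (∀ x, g.toFun (ι.toFun x) = f.toFun x) ∧
      ∀ g' : HVHom V T N, (∀ x, g'.toFun (ι.toFun x) = f.toFun x) →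
        ∀ y, g'.toFun y = g.toFun y

/-- The Brown-Gitler object `J_V(n)` of `H^*V-U`: it represents `M ↦ (Mⁿ)^∨` on
`H^*V-U`. -/
def IsHVBrownGitler {e : ℕ} (U : HVSetup e) (J : HVModule U) (n : ℕ) : Prop :=
  ∃ Φ : ∀ M : HVModule U, HVHom U M J → (↥(M.E.grading n) →ₗ[ZMod 2] ZMod 2),
    (∀ M, Function.Bijective (Φ M)) ∧
    ∀ (M M' : HVModule U) (f : HVHom U M' M) (g : HVHom U M J)
      (x : ↥(M'.E.grading n)),
      Φ M' ⟨g.toUnstableHom.comp f.toUnstableHom,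
        fun h y => by simp [UnstableHom.comp, f.map_hsmul, g.map_hsmul]⟩ x =
      Φ M g ⟨f.toFun x, f.map_grading n x x.2⟩

/-- The data of `Fix_V N` together with its couniversal property: `Fix_V` is left
adjoint to `H^*V ⊗ -`, and `η : N → H^*V ⊗ Fix_V N` is the unit (the adjoint of the
identity of `Fix_V N`). -/
structure FixData {d : ℕ} (V : HVSetup d) (N : HVModule V) where
  F : UnstableModule
  T : HVModule V
  ι : UnstableHom F T.E
  tensor : IsHVTensor V F T ι
  η : HVHom V N T
  univ : ∀ (P : UnstableModule) (T' : HVModule V) (ι' : UnstableHom P T'.E),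
    IsHVTensor V P T' ι' → ∀ f : HVHom V N T',
    ∃ φ : UnstableHom F P,
      (∀ g : HVHom V T T', (∀ x, g.toFun (ι.toFun x) = ι'.toFun (φ.toFun x)) →
        ∀ y, g.toFun (η.toFun y) = f.toFun y) ∧
      ∀ φ' : UnstableHom F P,
        (∀ g : HVHom V T T', (∀ x, g.toFun (ι.toFun x) = ι'.toFun (φ'.toFun x)) →
          ∀ y, g.toFun (η.toFun y) = f.toFun y) →
        ∀ z, φ'.toFun z = φ.toFun z

/-- `0 → M → I₀ → I₁` is the beginning of a minimal injective resolution in `U`: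
`I₀` is the injective hull of `M` and `I₁` is the injective hull of `I₀/M`. -/
def IsMinResStartU (M I0 I1 : UnstableModule) (e0 : UnstableHom M I0)
    (a : UnstableHom I0 I1) : Prop :=
  IsInjectiveHullU M I0 e0 ∧ IsInjectiveU I1 ∧
  (∀ x, a.toFun x = 0 ↔ x ∈ Set.range e0.toFun) ∧
  ∀ (C : UnstableModule) (q : UnstableHom I0 C), Function.Surjective q.toFun →
    (∀ x, q.toFun x = 0 ↔ x ∈ Set.range e0.toFun) →
    ∀ a' : UnstableHom C I1, (∀ x, a'.toFun (q.toFun x) = a.toFun x) →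
      IsInjectiveHullU C I1 a'

/-- `0 → M → T₀ → T₁` is the beginning of a minimal injective resolution in `H^*V-U`. -/
def IsMinResStartHV {d : ℕ} {V : HVSetup d} (M T0 T1 : HVModule V)
    (e0 : HVHom V M T0) (a : HVHom V T0 T1) : Prop :=
  IsInjectiveHullHVU M T0 e0 ∧ IsInjectiveHVU T1 ∧
  (∀ x, a.toFun x = 0 ↔ x ∈ Set.range e0.toFun) ∧
  ∀ (C : HVModule V) (q : HVHom V T0 C), Function.Surjective q.toFun →
    (∀ x, q.toFun x = 0 ↔ x ∈ Set.range e0.toFun) →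
    ∀ a' : HVHom V C T1, (∀ x, a'.toFun (q.toFun x) = a.toFun x) →
      IsInjectiveHullHVU C T1 a'

/-- `M` is (isomorphic to) the `n`-fold suspension `Σⁿ F_2`: one-dimensional,
concentrated in degree `n`. -/
def IsSphereLike (M : UnstableModule) (n : ℕ) : Prop :=
  (∀ (m : ℕ) (x : M.carrier), x ∈ M.grading m → m ≠ n → x = 0) ∧
  ∃ x, x ∈ M.grading n ∧ x ≠ 0 ∧ ∀ y ∈ M.grading n, y = 0 ∨ y = x

/-- `SM` realizes the suspension `Σ M` in `U`. -/
def IsSuspensionU (M SM : UnstableModule) : Prop :=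
  ∃ s : M.carrier →+ SM.carrier, Function.Bijective s ∧
    (∀ (n : ℕ) (x : M.carrier), x ∈ M.grading n → s x ∈ SM.grading (n + 1)) ∧
    ∀ (k : ℕ) (x : M.carrier), s (Sq k • x) = Sq k • s x

/-- `SM` realizes the suspension `Σ M` in `H^*V-U`. -/
def IsSuspensionHV {d : ℕ} {V : HVSetup d} (M SM : HVModule V) : Prop :=
  ∃ s : M.E.carrier →+ SM.E.carrier, Function.Bijective s ∧
    (∀ (n : ℕ) (x : M.E.carrier), x ∈ M.E.grading n → s x ∈ SM.E.grading (n + 1)) ∧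
    (∀ (k : ℕ) (x : M.E.carrier), s (Sq k • x) = Sq k • s x) ∧
    ∀ (h : V.H) (x : M.E.carrier), s (h • x) = h • s x

/-- `M` realizes `Σ^dd (u · H^*V)`, the `dd`-fold suspension of the principal ideal
generated by a homogeneous element `u` of degree `du` (an unstable `H^*V`-`A`-submodule
of `H^*V` since `u` is a product of linear forms): the witness `f` sends `h` to
`Σ^dd (u·h)`. -/
def IsSuspensionOfPrincipalIdeal {d : ℕ} (V : HVSetup d) (M : HVModule V)
    (dd du : ℕ) (u : V.H) : Prop :=
  u ∈ V.grading du ∧ u ≠ 0 ∧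
  ∃ f : V.H →+ M.E.carrier,
    Function.Bijective f ∧
    (∀ (h h' : V.H), f (h' * h) = h' • f h) ∧
    (∀ (m : ℕ) (h : V.H), h ∈ V.grading m → f h ∈ M.E.grading (dd + du + m)) ∧
    ∀ (k : ℕ) (h h' : V.H), Sq k • (u * h) = u * h' → Sq k • f h = f h'

/-- A `V`-CW-complex, recorded through its mod 2 cohomology `H^*X`, its mod 2
equivariant cohomology `H^*_V X` (the cohomology of the Borel construction, an
unstable `H^*V`-`A`-module) and the restriction map `H^*_V X → H^*X` to the fibre of
`X → X_{hV} → BV`.  The field `collapse_of_free` records the classical topological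
fact that if `H^*_V X` is `H^*V`-free then the Serre spectral sequence collapses, so
that the restriction map identifies `F_2 ⊗_{H^*V} H^*_V X` with `H^*X`. -/
structure VCWComplex {d : ℕ} (V : HVSetup d) : Type 1 where
  cohomology : UnstableModule
  equivariantCohomology : HVModule V
  restriction : UnstableHom equivariantCohomology.E cohomology
  restriction_hsmul : ∀ (m : ℕ) (h : V.H) (x : equivariantCohomology.E.carrier),
    1 ≤ m → h ∈ V.grading m → restriction.toFun (h • x) = 0
  collapse_of_free : Module.Free V.H equivariantCohomology.E.carrier →
    Function.Surjective restriction.toFun ∧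
    ∀ y, restriction.toFun y = 0 ↔ equivariantCohomology.barπ.toFun y = 0

end

/-!
Let `x̄ ∈ P̄` be homogeneous with `f̄ x̄ = 0` and lift it to a homogeneous `x ∈ P`; then
`f x ∈ (t_0, …, t_{d-1})·Q`. If `f x ∈ (t_m, …, t_{d-1})·Q` with `m < d`, write
`f x ≡ t q` modulo `(t_{m+1}, …)·Q`, where `t = t_m` and `|q| = |x| - 1`. The submodule
`N = f P + (t_{m+1}, …)·Q` is stable under `H^*V` and `A` and contains `t q`; as
`Sq^{j+1}(t q) = t Sq^{j+1} q + t² Sq^j q`, it also contains `t Sq^{|q|} q = f p + w`. By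
instability `Sq₀ x = Sq^{|x|} x` satisfies `f (Sq₀ x - t p) ≡ t² Sq^{|q|} q - t f p ≡ 0`, so
`Sq₀ x` is congruent modulo `H̃^*V·P` to an element pushed one generator further. After `d` steps
`f` of the remaining element vanishes, so `Sq₀^d x̄ = 0`, and `x̄ = 0` because `P̄` is reduced.
-/

noncomputable section

theorem Sq_zero : Sq 0 = 1 := by
  rw [Sq, RingQuot.mkAlgHom_rel (ZMod 2) AdemRel.unit, map_one]

namespace UnstableModule

variable (M : UnstableModule)

def component (n : ℕ) : M.carrier →ₗ[ZMod 2] M.carrier :=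
  (M.grading n).subtype ∘ₗ DirectSum.component (ZMod 2) ℕ (fun k => M.grading k) n ∘ₗ
    (LinearEquiv.ofBijective (DirectSum.coeLinearMap M.grading) M.isInternal).symm.toLinearMap

variable {M}

theorem component_mem (n : ℕ) (x : M.carrier) : M.component n x ∈ M.grading n :=
  Subtype.prop _

theorem component_of_mem {n : ℕ} {x : M.carrier} (hx : x ∈ M.grading n) :
    M.component n x = x := by
  simp [component, ← DirectSum.apply_eq_component, M.isInternal.ofBijective_coeLinearMap_of_mem hx]

theorem component_of_mem_of_ne {n k : ℕ} {x : M.carrier} (hx : x ∈ M.grading n) (h : n ≠ k) :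
    M.component k x = 0 := by
  simp [component, ← DirectSum.apply_eq_component,
    M.isInternal.ofBijective_coeLinearMap_of_mem_ne h hx]

theorem eq_zero_of_forall_component_eq_zero {x : M.carrier} (h : ∀ n, M.component n x = 0) :
    x = 0 := by
  set e := LinearEquiv.ofBijective (DirectSum.coeLinearMap M.grading) M.isInternal
  have : e.symm x = 0 := DFinsupp.ext fun n => Subtype.ext (h n)
  simpa using congrArg e this

theorem induction_on_homogeneous {motive : M.carrier → Prop} (x : M.carrier)
    (mem : ∀ n, ∀ x ∈ M.grading n, motive x) (zero : motive 0)
    (add : ∀ x y, motive x → motive y → motive (x + y)) : motive x :=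
  Submodule.iSup_induction M.grading (motive := motive)
    (M.isInternal.submodule_iSup_eq_top ▸ Submodule.mem_top) mem zero add

variable {N : UnstableModule}

theorem component_add_map_of_shift (φ : M.carrier →+ N.carrier) {s : ℕ}
    (hφ : ∀ k, ∀ x ∈ M.grading k, φ x ∈ N.grading (k + s)) (n : ℕ) (x : M.carrier) :
    N.component (n + s) (φ x) = φ (M.component n x) := by
  induction x using M.induction_on_homogeneous with
  | mem k x hx =>
    obtain rfl | hkn := eq_or_ne k n
    · rw [component_of_mem (hφ k x hx), component_of_mem hx]
    · rw [component_of_mem_of_ne (hφ k x hx) (by omega), component_of_mem_of_ne hx hkn, map_zero]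
  | zero => simp
  | add x y hx hy => simp [hx, hy]

theorem component_map_of_lt_shift (φ : M.carrier →+ N.carrier) {s : ℕ}
    (hφ : ∀ k, ∀ x ∈ M.grading k, φ x ∈ N.grading (k + s)) {n : ℕ} (hn : n < s)
    (x : M.carrier) : N.component n (φ x) = 0 := by
  induction x using M.induction_on_homogeneous with
  | mem k x hx => exact component_of_mem_of_ne (hφ k x hx) (by omega)
  | zero => simp
  | add x y hx hy => simp [hx, hy]

end UnstableModule

namespace UnstableHom

variable {M N : UnstableModule} (φ : UnstableHom M N)

theorem component_map (n : ℕ) (x : M.carrier) :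
    N.component n (φ.toFun x) = φ.toFun (M.component n x) :=
  UnstableModule.component_add_map_of_shift (s := 0) φ.toFun.toAddMonoidHom φ.map_grading n x

theorem exists_mem_grading_eq (hφ : Function.Surjective φ.toFun) {n : ℕ} {y : N.carrier}
    (hy : y ∈ N.grading n) : ∃ x ∈ M.grading n, φ.toFun x = y := by
  obtain ⟨x, rfl⟩ := hφ y
  exact ⟨M.component n x, M.component_mem n x, by rw [← component_map, N.component_of_mem hy]⟩

theorem injective_of_homogeneous (hφ : ∀ n, ∀ x ∈ M.grading n, φ.toFun x = 0 → x = 0) :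
    Function.Injective φ.toFun := by
  refine (injective_iff_map_eq_zero φ.toFun).mpr fun x hx => ?_
  refine M.eq_zero_of_forall_component_eq_zero fun n => ?_
  exact hφ n _ (M.component_mem n x) (by rw [← component_map, hx, map_zero])

end UnstableHom

theorem sq0Iter_succ' (M : UnstableModule) (k n : ℕ) (x : M.carrier) :
    sq0Iter M (k + 1) n x = sq0Iter M k (n + n) (Sq n • x) := by
  induction k with
  | zero => simp [sq0Iter]
  | succ k ih => rw [sq0Iter, ih, sq0Iter, pow_succ, mul_assoc, two_mul]

theorem sq0Iter_mem {M : UnstableModule} (k : ℕ) {n : ℕ} {x : M.carrier} (hx : x ∈ M.grading n) :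
    sq0Iter M k n x ∈ M.grading (2 ^ k * n) := by
  induction k with
  | zero => simpa [sq0Iter] using hx
  | succ k ih =>
    have := M.sq_mem (2 ^ k * n) _ _ ih
    rwa [← two_mul, ← mul_assoc, ← pow_succ'] at this

theorem UnstableHom.map_sq0Iter {M N : UnstableModule} (φ : UnstableHom M N) (k n : ℕ)
    (x : M.carrier) : φ.toFun (sq0Iter M k n x) = sq0Iter N k n (φ.toFun x) := by
  induction k with
  | zero => rfl
  | succ k ih => rw [sq0Iter, map_smul, ih, sq0Iter]

theorem IsReducedU.eq_zero_of_sq0Iter_eq_zero {M : UnstableModule} (hM : IsReducedU M) (k : ℕ)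
    {n : ℕ} {x : M.carrier} (hx : x ∈ M.grading n) (h : sq0Iter M k n x = 0) : x = 0 := by
  induction k with
  | zero => exact h
  | succ k ih => exact ih (hM _ _ (sq0Iter_mem k hx) h)

namespace HVSetup

variable {d : ℕ} (V : HVSetup d)

theorem monomial_mem_grading (e : Fin d → ℕ) : ∏ i, V.gens i ^ e i ∈ V.grading (∑ i, e i) := by
  induction (Finset.univ : Finset (Fin d)) using Finset.induction_on with
  | empty => simpa using V.one_mem
  | insert i s hi ih =>
    rw [Finset.prod_insert hi, Finset.sum_insert hi]
    refine V.mul_mem _ _ _ _ ?_ ih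
    induction e i with
    | zero => simpa using V.one_mem
    | succ k ihk => simpa [pow_succ] using V.mul_mem k 1 _ _ ihk (V.gens_deg i)

theorem sub_component_zero_mem_span_gens (h : V.H) :
    h - V.toUnstable.component 0 h ∈ Ideal.span (Set.range V.gens) := by
  have hspan := V.monomial_span (Submodule.mem_top (x := h))
  induction hspan using Submodule.span_induction with
  | mem _ hmon =>
    obtain ⟨e, rfl⟩ := hmon
    obtain rfl | ⟨i, hi⟩ := eq_or_ne e 0 |>.imp id Function.ne_iff.mp
    · simp [UnstableModule.component_of_mem (M := V.toUnstable) V.one_mem]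
    · have hdeg : (∑ j, e j) ≠ 0 := fun h0 => hi (Finset.sum_eq_zero_iff.mp h0 i (by simp))
      rw [UnstableModule.component_of_mem_of_ne (M := V.toUnstable) (V.monomial_mem_grading e)
        hdeg, sub_zero]
      exact Ideal.mem_of_dvd _ ((dvd_pow_self _ hi).trans (Finset.dvd_prod_of_mem _ (by simp)))
        (Ideal.subset_span ⟨i, rfl⟩)
  | zero => simp
  | add x y _ _ hx hy => simpa [add_sub_add_comm] using add_mem hx hy
  | smul c x _ hx => simpa [← smul_sub] using ZMod.smul_mem hx c

theorem mem_span_gens_of_mem_grading {m : ℕ} {h : V.H} (hh : h ∈ V.grading m) (hm : m ≠ 0) :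
    h ∈ Ideal.span (Set.range V.gens) := by
  simpa [UnstableModule.component_of_mem_of_ne (M := V.toUnstable) hh hm] using
    V.sub_component_zero_mem_span_gens h

end HVSetup

namespace HVModule

variable {d : ℕ} {V : HVSetup d} (E : HVModule V)

theorem gens_smul_mem_grading (i : Fin d) {k : ℕ} {x : E.E.carrier} (hx : x ∈ E.E.grading k) :
    V.gens i • x ∈ E.E.grading (k + 1) :=
  add_comm 1 k ▸ E.smul_grading 1 k _ x (V.gens_deg i) hx

theorem component_succ_gens_smul (i : Fin d) (n : ℕ) (x : E.E.carrier) :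
    E.E.component (n + 1) (V.gens i • x) = V.gens i • E.E.component n x :=
  UnstableModule.component_add_map_of_shift (DistribSMul.toAddMonoidHom _ (V.gens i))
    (fun _ _ => E.gens_smul_mem_grading i) n x

theorem component_zero_gens_smul (i : Fin d) (x : E.E.carrier) :
    E.E.component 0 (V.gens i • x) = 0 :=
  UnstableModule.component_map_of_lt_shift (DistribSMul.toAddMonoidHom _ (V.gens i))
    (fun _ _ => E.gens_smul_mem_grading i) zero_lt_one x

theorem sq_succ_gens_smul (i : Fin d) (j : ℕ) (x : E.E.carrier) :
    Sq (j + 1) • (V.gens i • x) = V.gens i • (Sq (j + 1) • x + V.gens i • Sq j • x) := by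
  have hvanish : ∀ a ∈ Finset.range j,
      (Sq (a + 1 + 1) • V.gens i) • Sq (j + 1 - (a + 1 + 1)) • x = 0 :=
    fun a _ => by rw [V.instability _ 1 _ (V.gens_deg i) (by omega), zero_smul]
  rw [E.cartan, Finset.sum_range_succ', Finset.sum_range_succ', Finset.sum_eq_zero hvanish,
    Sq_zero, one_smul, zero_add, V.sq_one_gen, mul_smul]
  simp [add_comm]

theorem barπ_gens_smul (i : Fin d) (x : E.E.carrier) : E.barπ.toFun (V.gens i • x) = 0 :=
  (E.barπ_ker _).mpr (Submodule.subset_span ⟨1, _, x, le_rfl, V.gens_deg i, rfl⟩)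

def genSum (m : ℕ) : (Fin d → E.E.carrier) →ₗ[V.H] E.E.carrier :=
  ∑ i : Fin d with m ≤ i.val, V.gens i • LinearMap.proj i

def genSpan (m : ℕ) : Submodule V.H E.E.carrier :=
  LinearMap.range (E.genSum m)

variable {E}

theorem genSum_apply (m : ℕ) (z : Fin d → E.E.carrier) :
    E.genSum m z = ∑ i : Fin d with m ≤ i.val, V.gens i • z i := by
  simp [genSum]

theorem genSum_eq_add {m : ℕ} (hm : m < d) (z : Fin d → E.E.carrier) :
    E.genSum m z = V.gens ⟨m, hm⟩ • z ⟨m, hm⟩ + E.genSum (m + 1) z := by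
  have : Finset.univ.filter (fun i : Fin d => m ≤ i.val)
      = insert ⟨m, hm⟩ (Finset.univ.filter fun i : Fin d => m + 1 ≤ i.val) := by
    ext i
    simp only [Finset.mem_filter_univ, Finset.mem_insert, Fin.ext_iff]
    omega
  rw [genSum_apply, genSum_apply, this, Finset.sum_insert (by simp)]

theorem eq_zero_of_mem_genSpan {m : ℕ} (hm : d ≤ m) {y : E.E.carrier} (hy : y ∈ E.genSpan m) :
    y = 0 := by
  obtain ⟨z, rfl⟩ := hy
  rw [genSum_apply, Finset.sum_eq_zero]
  intro i hi
  simp only [Finset.mem_filter_univ] at hi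
  omega

theorem component_zero_genSum (m : ℕ) (z : Fin d → E.E.carrier) :
    E.E.component 0 (E.genSum m z) = 0 := by
  simp [genSum_apply, component_zero_gens_smul]

theorem component_succ_genSum (m n : ℕ) (z : Fin d → E.E.carrier) :
    E.E.component (n + 1) (E.genSum m z) = E.genSum m fun i => E.E.component n (z i) := by
  simp [genSum_apply, component_succ_gens_smul]

theorem component_mem_genSpan {m : ℕ} (k : ℕ) {y : E.E.carrier} (hy : y ∈ E.genSpan m) :
    E.E.component k y ∈ E.genSpan m := by
  obtain ⟨z, rfl⟩ := hy
  cases k with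
  | zero => simp [component_zero_genSum, zero_mem]
  | succ k => exact ⟨_, (component_succ_genSum m k z).symm⟩

theorem sq_smul_mem_genSpan {m : ℕ} (k : ℕ) {y : E.E.carrier} (hy : y ∈ E.genSpan m) :
    Sq k • y ∈ E.genSpan m := by
  obtain ⟨z, rfl⟩ := hy
  cases k with
  | zero => exact ⟨z, by simp [Sq_zero]⟩
  | succ j =>
    exact ⟨fun i => Sq (j + 1) • z i + V.gens i • Sq j • z i, by
      simp [genSum_apply, Finset.smul_sum, sq_succ_gens_smul]⟩

theorem smul_mem_genSpan_zero {h : V.H} (hh : h ∈ Ideal.span (Set.range V.gens))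
    (x : E.E.carrier) : h • x ∈ E.genSpan 0 := by
  obtain ⟨c, rfl⟩ := Ideal.mem_span_range_iff_exists_fun.mp hh
  exact ⟨fun i => c i • x, by simp [genSum_apply, Finset.sum_smul, smul_smul, mul_comm]⟩

theorem mem_genSpan_zero_of_barπ_eq_zero {y : E.E.carrier} (hy : E.barπ.toFun y = 0) :
    y ∈ E.genSpan 0 := by
  refine (Submodule.span_le (p := AddSubgroup.toZModSubmodule 2 (E.genSpan 0).toAddSubgroup)).mpr
    ?_ ((E.barπ_ker y).mp hy)
  rintro _ ⟨m, h, x, hm, hh, rfl⟩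
  exact smul_mem_genSpan_zero (V.mem_span_gens_of_mem_grading hh (by omega)) x

theorem gens_smul_sq_smul_mem {N : Submodule V.H E.E.carrier}
    (hN : ∀ k, ∀ y ∈ N, Sq k • y ∈ N) (i : Fin d) {q : E.E.carrier} (hq : V.gens i • q ∈ N)
    (r : ℕ) : V.gens i • Sq r • q ∈ N := by
  -- with all powers `t ^ (s + 1)` the extra term `t² Sq^r q` is covered by the induction
  suffices ∀ r s : ℕ, V.gens i ^ (s + 1) • Sq r • q ∈ N by simpa using this r 0
  intro r
  induction r with
  | zero =>
    intro s
    rw [Sq_zero, one_smul, pow_succ, mul_smul]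
    exact N.smul_mem _ hq
  | succ r ih =>
    intro s
    have h := N.smul_mem (V.gens i ^ s) (hN (r + 1) _ hq)
    rw [sq_succ_gens_smul, smul_add, smul_add, ← mul_smul, ← pow_succ, smul_smul (V.gens i ^ s),
      ← pow_succ, ← mul_smul, ← pow_succ] at h
    exact (N.add_mem_iff_left (ih (s + 1))).mp h

end HVModule

namespace HVHom

variable {d : ℕ} {V : HVSetup d} {P Q : HVModule V} (f : HVHom V P Q)

def toHLinearMap : P.E.carrier →ₗ[V.H] Q.E.carrier where
  toFun := f.toFun
  map_add' := map_add f.toFun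
  map_smul' := f.map_hsmul

theorem sq_smul_mem_range_sup_genSpan {m : ℕ} (k : ℕ) {y : Q.E.carrier}
    (hy : y ∈ LinearMap.range f.toHLinearMap ⊔ Q.genSpan m) :
    Sq k • y ∈ LinearMap.range f.toHLinearMap ⊔ Q.genSpan m := by
  obtain ⟨_, ⟨p, rfl⟩, w, hw, rfl⟩ := Submodule.mem_sup.mp hy
  rw [smul_add]
  exact add_mem (Submodule.mem_sup_left ⟨Sq k • p, map_smul f.toFun _ _⟩)
    (Submodule.mem_sup_right (HVModule.sq_smul_mem_genSpan k hw))

theorem exists_map_sq_smul_sub_gens_smul_mem_genSpan {m n : ℕ} (hm : m < d) {x : P.E.carrier}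
    (hx : x ∈ P.E.grading (n + 1)) (hfx : f.toFun x ∈ Q.genSpan m) :
    ∃ p, f.toFun (Sq (n + 1) • x - V.gens ⟨m, hm⟩ • p) ∈ Q.genSpan (m + 1) := by
  obtain ⟨z, hz⟩ := hfx
  have hfx_eq : f.toFun x = Q.E.component (n + 1) (Q.genSum m z) := by
    rw [hz, Q.E.component_of_mem (f.map_grading _ x hx)]
  rw [HVModule.component_succ_genSum, HVModule.genSum_eq_add hm] at hfx_eq
  set t := V.gens ⟨m, hm⟩
  set q := fun i => Q.E.component n (z i)
  set N := LinearMap.range f.toHLinearMap ⊔ Q.genSpan (m + 1)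
  have htq : t • q ⟨m, hm⟩ ∈ N := by
    rw [eq_sub_of_add_eq hfx_eq.symm]
    exact sub_mem (Submodule.mem_sup_left ⟨x, rfl⟩) (Submodule.mem_sup_right ⟨q, rfl⟩)
  obtain ⟨_, ⟨p, rfl⟩, w, hw, hpw⟩ := Submodule.mem_sup.mp
    (HVModule.gens_smul_sq_smul_mem (fun k _ => f.sq_smul_mem_range_sup_genSpan k) _ htq n)
  have hinst : Sq (n + 1) • q ⟨m, hm⟩ = 0 :=
    Q.E.instability _ n _ (Q.E.component_mem n _) (Nat.lt_succ_self n)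
  have hf_sub : f.toFun (Sq (n + 1) • x - t • p) = t • w + Sq (n + 1) • Q.genSum (m + 1) q := by
    rw [map_sub, map_smul, f.map_hsmul, hfx_eq, smul_add, HVModule.sq_succ_gens_smul, hinst,
      zero_add, ← hpw]
    change t • (f.toFun p + w) + _ - t • f.toFun p = _
    rw [smul_add]
    abel
  exact ⟨p, hf_sub ▸ add_mem (Submodule.smul_mem _ _ hw) (HVModule.sq_smul_mem_genSpan _ ⟨q, rfl⟩)⟩

theorem exists_sq_smul_eq_of_mem_genSpan (hf : Function.Injective f.toFun) {m n : ℕ} (hm : m < d)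
    {x : P.E.carrier} (hx : x ∈ P.E.grading n) (hfx : f.toFun x ∈ Q.genSpan m) :
    ∃ x' ∈ P.E.grading (n + n), f.toFun x' ∈ Q.genSpan (m + 1) ∧
      P.barπ.toFun (Sq n • x) = P.barπ.toFun x' := by
  cases n with
  | zero =>
    have hfx0 : f.toFun x = 0 := by
      obtain ⟨z, hz⟩ := hfx
      rw [← Q.E.component_of_mem (f.map_grading 0 x hx), ← hz, HVModule.component_zero_genSum]
    exact ⟨0, zero_mem _, by simp [zero_mem], by rw [hf (hfx0.trans (map_zero _).symm), smul_zero]⟩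
  | succ n =>
    obtain ⟨p, hp⟩ := f.exists_map_sq_smul_sub_gens_smul_mem_genSpan hm hx hfx
    refine ⟨P.E.component _ (Sq (n + 1) • x - V.gens ⟨m, hm⟩ • p), P.E.component_mem _ _, ?_, ?_⟩
    · rw [← f.component_map]
      exact HVModule.component_mem_genSpan _ hp
    · rw [map_sub, map_sub, P.E.component_of_mem (P.E.sq_mem _ _ _ hx), ← P.barπ.component_map,
        HVModule.barπ_gens_smul, map_zero, sub_zero]

theorem barπ_sq0Iter_eq_zero (hf : Function.Injective f.toFun) (j : ℕ) {m n : ℕ}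
    (hj : m + j = d) {x : P.E.carrier} (hx : x ∈ P.E.grading n)
    (hfx : f.toFun x ∈ Q.genSpan m) : P.barπ.toFun (sq0Iter P.E j n x) = 0 := by
  induction j generalizing m n x with
  | zero =>
    have hx0 : x = 0 := hf (by rw [HVModule.eq_zero_of_mem_genSpan hj.ge hfx, map_zero])
    rw [hx0]
    exact map_zero _
  | succ j ih =>
    obtain ⟨x', hx', hfx', hbar⟩ := f.exists_sq_smul_eq_of_mem_genSpan hf (by omega) hx hfx
    rw [sq0Iter_succ', P.barπ.map_sq0Iter, hbar, ← P.barπ.map_sq0Iter]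
    exact ih (by omega) hx' hfx'

end HVHom

end

theorem bar_injective_of_injective_of_reduced_general {d : ℕ} (V : HVSetup d) (P Q : HVModule V)
    (f : HVHom V P Q) (hf : Function.Injective f.toFun)
    (hred : IsReducedU P.bar)
    (g : UnstableHom P.bar Q.bar)
    (hg : ∀ x, g.toFun (P.barπ.toFun x) = Q.barπ.toFun (f.toFun x)) :
    Function.Injective g.toFun := by
  refine g.injective_of_homogeneous fun n xb hxb hgxb => ?_
  obtain ⟨x, hx, rfl⟩ := P.barπ.exists_mem_grading_eq P.barπ_surj hxb
  have hfx : f.toFun x ∈ Q.genSpan 0 :=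
    HVModule.mem_genSpan_zero_of_barπ_eq_zero (by rw [← hg, hgxb])
  refine hred.eq_zero_of_sq0Iter_eq_zero d hxb ?_
  rw [← P.barπ.map_sq0Iter]
  exact f.barπ_sq0Iter_eq_zero hf d (zero_add d) hx hfx

/-- Lemma 3.1.2.  Let `P` and `Q` be unstable `H^*V`-`A`-modules
that are free as `H^*V`-modules and `f : P → Q` an injective morphism of `H^*V-U`.
If `P̄` is a reduced unstable `A`-module, then the induced map `f̄ : P̄ → Q̄` is
injective. -/
theorem bar_injective_of_injective_of_reduced {d : ℕ} (V : HVSetup d) (P Q : HVModule V)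
    (hP : Module.Free V.H P.E.carrier) (hQ : Module.Free V.H Q.E.carrier)
    (f : HVHom V P Q) (hf : Function.Injective f.toFun)
    (hred : IsReducedU P.bar)
    (g : UnstableHom P.bar Q.bar)
    (hg : ∀ x, g.toFun (P.barπ.toFun x) = Q.barπ.toFun (f.toFun x)) :
    Function.Injective g.toFun :=
  bar_injective_of_injective_of_reduced_general V P Q f hf hred g hg
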